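/- Let A be a unital C*-algebra, let B be a C*-algebra, and let T : A → B be a continuous linear map which is a triple homomorphism at the unit 1 of A. Then T is a triple homomorphism, i.e., T({a,b,c}) = {T(a),T(b),T(c)} for all a, b, c ∈ A. Furthermore, e := T(1) is a partial isometry and T is a Jordan *-homomorphism into the Peirce-2 subspace of e, that is, T(x*) = e T(x)* e for all x ∈ A and T((ab + ba)/2) = (1/2)(T(a) e* T(b) + T(b) e* T(a)) for all a, b ∈ A. -/

import Mathlib

/-- The C*-triple product `{a,b,c} = (1/2)(a b* c + c b* a)`. -/
noncomputable def trip {R : Type*} [NonUnitalRing R] [Module ℂ R] [Star R] (a b c : R) : R :=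
  (2 : ℂ)⁻¹ • (a * star b * c + c * star b * a)

/-!
Put `e = T 1` and feed the hypothesis one-parameter families of triples whose triple product is
identically `1`, then differentiate at `0`. The triple `(1, 1, 1)` makes `e` a partial isometry.
The family `(exp (s x), exp (-s x*), 1)` gives `{T x, e, e} = e T(x*)* e`, so `T x` lies in the
Peirce `2 ⊕ 0` part of `e`. For self-adjoint `h`, the family `(exp (s h), exp (s h), exp (-2 s h))`
gives `{X, X, Y} = e` with `X = T (exp (s h))`, `Y = T (exp (-2 s h))`; their Peirce `0` parts
vanish at `s = 0` and satisfy `{X₀, X₀, Y₀} = 0`, so dividing by `s³` shows that the Peirce `0`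
part `τ` of `T h` satisfies `τ τ* τ = 0`, hence `τ = 0`. Differentiating the family
`(exp (s x), 1, exp (-s x))` twice gives `T (x²) = {T x, e, T x}`. Polarization and the identity
`{a,b,c} = (a∘b*)∘c + (c∘b*)∘a - (a∘c)∘b*`, valid both in `A` and in the Peirce `2` space of `e`,
then make `T` a triple homomorphism.
-/

open NormedSpace Filter Topology ComplexStarModule

section TripleProduct

variable {R : Type*} [NonUnitalRing R] [StarRing R] [Module ℂ R]

lemma two_smul_trip (a b c : R) : (2 : ℂ) • trip a b c = a * star b * c + c * star b * a := by
  rw [trip, smul_smul, mul_inv_cancel₀ two_ne_zero, one_smul]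

lemma trip_eq_iff {a b c d : R} : trip a b c = d ↔ a * star b * c + c * star b * a = d + d := by
  rw [← two_smul ℂ d, ← two_smul_trip]
  exact (smul_right_injective R two_ne_zero).eq_iff.symm

lemma trip_comm (a b c : R) : trip a b c = trip c b a := by rw [trip, trip, add_comm]

lemma trip_self (a b : R) : trip a b a = a * star b * a :=
  trip_eq_iff.2 rfl

@[simp] lemma trip_zero_mid (a c : R) : trip a 0 c = 0 := by simp [trip]

@[simp] lemma trip_zero_right (a b : R) : trip a b 0 = 0 := by simp [trip]

@[simp] lemma trip_neg_right (a b c : R) : trip a b (-c) = -trip a b c := by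
  simp only [trip, mul_neg, neg_mul, ← neg_add, smul_neg]

lemma trip_add_add (a b k : R) :
    trip (a + b) k (a + b) = trip a k a + trip b k b + (2 : ℂ) • trip a k b := by
  simp only [trip, smul_add, mul_add, add_mul, smul_smul]
  module

lemma trip_mul_star_mul [IsScalarTower ℂ R R] [SMulCommClass ℂ R R] (u v w e : R) :
    trip u (e * star v * e) w =
      trip u e (trip v e w) + trip w e (trip u e v) - trip v e (trip u e w) := by
  simp only [trip, star_mul, star_star, smul_add, smul_mul_assoc, mul_smul_comm,
    mul_add, add_mul, smul_smul, mul_assoc]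
  module

lemma LinearMap.map_trip_of_map_trip_self {S : Type*} [NonUnitalRing S] [StarRing S]
    [Module ℂ S] (T : R →ₗ[ℂ] S) {k : R} {k' : S}
    (h : ∀ x, T (trip x k x) = trip (T x) k' (T x)) (a b : R) :
    T (trip a k b) = trip (T a) k' (T b) := by
  have hab := h (a + b)
  rw [trip_add_add, map_add, map_add, map_smul, h a, h b, map_add, trip_add_add] at hab
  exact smul_right_injective S two_ne_zero (add_left_cancel hab)

end TripleProduct

section PeirceTwo

variable {R : Type*} [NonUnitalRing R] [StarRing R] {e : R}

/-- For a partial isometry `e` this is the Peirce `2` space `e e* R e* e`. -/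
def peirceTwo (e : R) : Set R := {z | e * star e * z = z ∧ z * star e * e = z}

lemma trip_eq_self_of_mem_peirceTwo [Module ℂ R] {z : R} (hz : z ∈ peirceTwo e) :
    trip z e e = z :=
  trip_eq_iff.2 (by rw [hz.1, hz.2])

lemma mul_star_mul_star_mul_eq_of_mem_peirceTwo {z : R} (hz : z ∈ peirceTwo e) :
    e * star (e * star z * e) * e = z := by
  have : e * star (e * star z * e) * e = e * star e * z * star e * e := by
    rw [star_mul, star_mul, star_star]; noncomm_ring
  rw [this, hz.1, hz.2]

lemma mul_star_mul_comm_of_trip_eq [Module ℂ R] (he : e * star e * e = e) {z y : R}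
    (h : trip z e e = e * y * e) : e * star e * z = z * star e * e := by
  rw [trip_eq_iff] at h
  have key : e * star e * z - z * star e * e =
      e * star e * (z * star e * e + e * star e * z)
        - (z * star e * e + e * star e * z) * star e * e := by
    calc e * star e * z - z * star e * e
        = (e * star e * e) * star e * z - z * star e * (e * star e * e) := by rw [he]
      _ = _ := by noncomm_ring
  rw [← sub_eq_zero, key, h]
  calc _ = (e * star e * e) * y * e + (e * star e * e) * y * e
        - (e * y * (e * star e * e) + e * y * (e * star e * e)) := by noncomm_ring
    _ = 0 := by rw [he, sub_self]

lemma trip_sub_mul_star_mul_eq_zero [Module ℂ R] (he : e * star e * e = e) {X Y : R}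
    (hX : e * star e * X = X * star e * e) (hY : e * star e * Y = Y * star e * e)
    (h : trip X X Y = e) :
    trip (X - e * star e * X) (X - e * star e * X) (Y - e * star e * Y) = 0 := by
  have hkill : ∀ z, e * star e * (z - e * star e * z) = 0 := fun z => by
    rw [show e * star e * (z - e * star e * z) = e * star e * z - (e * star e * e) * star e * z by
      noncomm_ring, he, sub_self]
  have hstar : star (X - e * star e * X) = star X - star X * (e * star e) := by
    rw [star_sub, star_mul, star_mul, star_star]
  rw [trip_eq_iff] at h ⊢
  rw [hstar, add_zero]
  calc (X - e * star e * X) * (star X - star X * (e * star e)) * (Y - e * star e * Y)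
        + (Y - e * star e * Y) * (star X - star X * (e * star e)) * (X - e * star e * X)
      = (X - e * star e * X) * star X * (Y - e * star e * Y)
        + (Y - e * star e * Y) * star X * (X - e * star e * X)
        - ((X - e * star e * X) * star X * (e * star e * (Y - e * star e * Y))
          + (Y - e * star e * Y) * star X * (e * star e * (X - e * star e * X))) := by
        noncomm_ring
    _ = (X - e * star e * X) * star X * (Y - Y * star e * e)
        + (Y - e * star e * Y) * star X * (X - X * star e * e) := by
        rw [hkill, hkill, mul_zero, mul_zero, add_zero, sub_zero, hX, hY]
    _ = (X * star X * Y + Y * star X * X) - e * star e * (X * star X * Y + Y * star X * X)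
        - (X * star X * Y + Y * star X * X) * star e * e
        + e * star e * (X * star X * Y + Y * star X * X) * star e * e := by noncomm_ring
    _ = 0 := by
        rw [h, mul_add, he, add_mul, add_mul, he]
        abel

end PeirceTwo

lemma HasDerivAt.nonUnital_mul {𝕜 R : Type*} [NontriviallyNormedField 𝕜] [NonUnitalNormedRing R]
    [NormedSpace 𝕜 R] [IsScalarTower 𝕜 R R] [SMulCommClass 𝕜 R R] {f g : 𝕜 → R} {f' g' : R}
    {t : 𝕜} (hf : HasDerivAt f f' t) (hg : HasDerivAt g g' t) :
    HasDerivAt (fun s => f s * g s) (f' * g t + f t * g') t := by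
  simpa [add_comm] using
    (ContinuousLinearMap.mul 𝕜 R).hasDerivAt_of_bilinear (fun _ => hf) (fun _ => hg)

section Calculus

variable {B : Type*} [NonUnitalCStarAlgebra B] {f g h : ℝ → B} {f' g' h' : B} {t : ℝ}

lemma trip_real_smul (r : ℝ) (a b c : B) :
    trip (r • a) (r • b) (r • c) = (r ^ 3) • trip a b c := by
  simp only [trip, star_smul, star_trivial, smul_mul_assoc, mul_smul_comm, smul_add, smul_smul]
  module

lemma HasDerivAt.trip (hf : HasDerivAt f f' t) (hg : HasDerivAt g g' t)
    (hh : HasDerivAt h h' t) :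
    HasDerivAt (fun s => trip (f s) (g s) (h s))
      (trip f' (g t) (h t) + trip (f t) g' (h t) + trip (f t) (g t) h') t := by
  refine ((((hf.nonUnital_mul hg.star).nonUnital_mul hh).fun_add
    ((hh.nonUnital_mul hg.star).nonUnital_mul hf)).fun_const_smul (2 : ℂ)⁻¹).congr_deriv ?_
  simp only [_root_.trip, ← smul_add]
  congr 1
  noncomm_ring

lemma Filter.Tendsto.trip {α : Type*} {l : Filter α} {u v w : α → B} {a b c : B}
    (hu : Tendsto u l (𝓝 a)) (hv : Tendsto v l (𝓝 b)) (hw : Tendsto w l (𝓝 c)) :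
    Tendsto (fun s => trip (u s) (v s) (w s)) l (𝓝 (trip a b c)) :=
  (((hu.mul hv.star).mul hw).add ((hw.mul hv.star).mul hu)).const_smul _

lemma trip_deriv_sum_eq_zero_of_const {c : B} (hconst : ∀ s, trip (f s) (g s) (h s) = c)
    (hf : HasDerivAt f f' t) (hg : HasDerivAt g g' t) (hh : HasDerivAt h h' t) :
    trip f' (g t) (h t) + trip (f t) g' (h t) + trip (f t) (g t) h' = 0 :=
  (hf.trip hg hh).unique <| (hasDerivAt_const t c).congr_of_eventuallyEq <|
    Eventually.of_forall hconst

lemma trip_second_deriv_sum_eq_zero_of_const {k c : B} {f' g' : ℝ → B} {f'' g'' : B}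
    (hconst : ∀ s, trip (f s) k (g s) = c) (hf : ∀ s, HasDerivAt f (f' s) s)
    (hg : ∀ s, HasDerivAt g (g' s) s) (hf' : HasDerivAt f' f'' t) (hg' : HasDerivAt g' g'' t) :
    trip f'' k (g t) + (2 : ℂ) • trip (f' t) k (g' t) + trip (f t) k g'' = 0 := by
  have hfirst : ∀ s, trip (f' s) k (g s) + trip (f s) k (g' s) = 0 := fun s => by
    simpa using trip_deriv_sum_eq_zero_of_const hconst (hf s) (hasDerivAt_const s k) (hg s)
  have hsecond := ((hf'.trip (hasDerivAt_const t k) (hg t)).fun_add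
    ((hf t).trip (hasDerivAt_const t k) hg')).unique
    ((hasDerivAt_const t 0).congr_of_eventuallyEq (Eventually.of_forall hfirst))
  simp only [trip_zero_mid, add_zero] at hsecond
  linear_combination (norm := module) hsecond

-- `trip (s⁻¹ • f s) (s⁻¹ • f s) (s⁻¹ • g s) = s⁻³ • 0` tends to `trip f' f' g'`.
lemma trip_deriv_eq_zero_of_trip_eq_zero (hf : HasDerivAt f f' 0) (hg : HasDerivAt g g' 0)
    (hf0 : f 0 = 0) (hg0 : g 0 = 0) (h : ∀ s, trip (f s) (f s) (g s) = 0) :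
    trip f' f' g' = 0 := by
  have hslope : ∀ {φ : ℝ → B} {φ' : B}, HasDerivAt φ φ' 0 → φ 0 = 0 →
      Tendsto (fun s : ℝ => s⁻¹ • φ s) (𝓝[≠] 0) (𝓝 φ') := fun hφ hφ0 => by
    simpa [hφ0] using hφ.tendsto_slope_zero
  refine tendsto_nhds_unique ((hslope hf hf0).trip (hslope hf hf0) (hslope hg hg0)) ?_
  simp only [trip_real_smul, h, smul_zero, tendsto_const_nhds]

end Calculus

lemma CStarRing.eq_zero_of_mul_star_mul_self_eq_zero {E : Type*} [NonUnitalNormedRing E]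
    [StarRing E] [CStarRing E] {x : E} (h : x * star x * x = 0) : x = 0 := by
  have : star (star x * x) * (star x * x) = 0 := by
    rw [star_mul, star_star, show star x * x * (star x * x) = star x * (x * star x * x) by
      noncomm_ring, h, mul_zero]
  exact (star_mul_self_eq_zero_iff x).1 ((star_mul_self_eq_zero_iff _).1 this)

section Exponential

variable {𝔸 : Type*} [NormedRing 𝔸] [NormedAlgebra ℝ 𝔸] [CompleteSpace 𝔸]

lemma exp_smul_mul_exp_smul (x : 𝔸) (s t : ℝ) :
    exp (s • x) * exp (t • x) = exp ((s + t) • x) := by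
  let +nondep : NormedAlgebra ℚ 𝔸 := .restrictScalars ℚ ℝ 𝔸
  rw [add_smul, exp_add_of_commute (((Commute.refl x).smul_left s).smul_right t)]

lemma exp_smul_mul_exp_smul_neg (x : 𝔸) (t : ℝ) : exp (t • x) * exp (t • -x) = 1 := by
  rw [smul_neg, ← neg_smul, exp_smul_mul_exp_smul, add_neg_cancel, zero_smul, exp_zero]

lemma exp_smul_neg_mul_exp_smul (x : 𝔸) (t : ℝ) : exp (t • -x) * exp (t • x) = 1 := by
  simpa using exp_smul_mul_exp_smul_neg (-x) t

variable {F : Type*} [NormedAddCommGroup F] [NormedSpace ℝ F]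

lemma ContinuousLinearMap.hasDerivAt_exp_smul (S : 𝔸 →L[ℝ] F) (x : 𝔸) (t : ℝ) :
    HasDerivAt (fun s : ℝ => S (exp (s • x))) (S (exp (t • x) * x)) t :=
  S.hasFDerivAt.comp_hasDerivAt t (hasDerivAt_exp_smul_const x t)

lemma ContinuousLinearMap.hasDerivAt_exp_smul_mul (S : 𝔸 →L[ℝ] F) (x y : 𝔸) (t : ℝ) :
    HasDerivAt (fun s : ℝ => S (exp (s • x) * y)) (S (exp (t • x) * x * y)) t :=
  S.hasFDerivAt.comp_hasDerivAt t ((hasDerivAt_exp_smul_const x t).mul_const y)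

end Exponential

def IsTripleHomAt {A B : Type*} [NonUnitalRing A] [Module ℂ A] [Star A] [NonUnitalRing B]
    [Module ℂ B] [Star B] (T : A → B) (z : A) : Prop :=
  ∀ a b c : A, trip a b c = z → trip (T a) (T b) (T c) = T z

namespace IsTripleHomAt

lemma map_one_mul_star_mul_self {A B : Type*} [Ring A] [StarRing A] [Module ℂ A]
    [NonUnitalRing B] [StarRing B] [Module ℂ B] {T : A → B} (hT : IsTripleHomAt T 1) :
    T 1 * star (T 1) * T 1 = T 1 := by
  simpa only [trip_self] using hT 1 1 1 (by rw [trip_self, star_one, mul_one, mul_one])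

variable {A B : Type*} [CStarAlgebra A] [NonUnitalCStarAlgebra B] {T : A →L[ℂ] B}

lemma trip_map_map_one_map_one (hT : IsTripleHomAt T 1) (x : A) :
    trip (T x) (T 1) (T 1) = T 1 * star (T (star x)) * T 1 := by
  have hconst : ∀ s : ℝ, trip (T (exp (s • x))) (T (exp (s • -star x))) (T 1) = T 1 := by
    refine fun s => hT _ _ _ ?_
    rw [trip_eq_iff, star_exp, star_smul, star_trivial, star_neg, star_star, mul_one, one_mul,
      exp_smul_mul_exp_smul_neg, exp_smul_neg_mul_exp_smul]
  have hderiv := trip_deriv_sum_eq_zero_of_const hconst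
    ((T.restrictScalars ℝ).hasDerivAt_exp_smul x 0)
    ((T.restrictScalars ℝ).hasDerivAt_exp_smul (-star x) 0) (hasDerivAt_const 0 (T 1))
  simp only [ContinuousLinearMap.coe_restrictScalars', zero_smul, exp_zero, one_mul, map_neg,
    star_neg, neg_mul, mul_neg, trip_zero_right, add_zero, trip_self, ← sub_eq_add_neg] at hderiv
  exact eq_of_sub_eq_zero hderiv

lemma map_one_mul_star_mul_map_comm (hT : IsTripleHomAt T 1) (x : A) :
    T 1 * star (T 1) * T x = T x * star (T 1) * T 1 :=
  mul_star_mul_comm_of_trip_eq hT.map_one_mul_star_mul_self (hT.trip_map_map_one_map_one x)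

lemma map_one_mul_star_mul_map_of_isSelfAdjoint (hT : IsTripleHomAt T 1) {x : A}
    (hx : IsSelfAdjoint x) : T 1 * star (T 1) * T x = T x := by
  have he := hT.map_one_mul_star_mul_self
  let P : A →L[ℝ] B :=
    (ContinuousLinearMap.id ℝ B - ContinuousLinearMap.mul ℝ B (T 1 * star (T 1))).comp
      (T.restrictScalars ℝ)
  have hP : ∀ y, P y = T y - T 1 * star (T 1) * T y := fun y => rfl
  have hvanish : ∀ s : ℝ,
      trip (P (exp (s • x))) (P (exp (s • x))) (P (exp (s • (-2 : ℝ) • x))) = 0 := by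
    intro s
    simp only [hP]
    refine trip_sub_mul_star_mul_eq_zero he (hT.map_one_mul_star_mul_map_comm _)
      (hT.map_one_mul_star_mul_map_comm _) (hT _ _ _ ?_)
    rw [trip_eq_iff, star_exp, star_smul, star_trivial, hx.star_eq, smul_smul,
      exp_smul_mul_exp_smul, exp_smul_mul_exp_smul, exp_smul_mul_exp_smul, exp_smul_mul_exp_smul,
      show s + s + s * -2 = 0 by ring, show s * -2 + s + s = 0 by ring, zero_smul, exp_zero]
  have hP1 : ∀ y : A, P (exp ((0 : ℝ) • y)) = 0 := by simp [hP, he]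
  have hderiv := trip_deriv_eq_zero_of_trip_eq_zero (P.hasDerivAt_exp_smul x 0)
    (P.hasDerivAt_exp_smul _ 0) (hP1 _) (hP1 _) hvanish
  simp only [zero_smul, exp_zero, one_mul, map_smul] at hderiv
  have hcube : trip (P x) (P x) ((-2 : ℝ) • P x) = (-2 : ℝ) • (P x * star (P x) * P x) := by
    simp only [trip, smul_mul_assoc, mul_smul_comm]
    module
  rw [hcube, smul_eq_zero] at hderiv
  have := CStarRing.eq_zero_of_mul_star_mul_self_eq_zero (hderiv.resolve_left (by norm_num))
  rwa [hP, sub_eq_zero, eq_comm] at this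

lemma map_mem_peirceTwo (hT : IsTripleHomAt T 1) (x : A) : T x ∈ peirceTwo (T 1) := by
  have hleft : ∀ y, T 1 * star (T 1) * T y = T y := fun y => by
    rw [← realPart_add_I_smul_imaginaryPart y, map_add, map_smul, mul_add, mul_smul_comm,
      hT.map_one_mul_star_mul_map_of_isSelfAdjoint (ℜ y).prop,
      hT.map_one_mul_star_mul_map_of_isSelfAdjoint (ℑ y).prop]
  exact ⟨hleft x, (hT.map_one_mul_star_mul_map_comm x).symm.trans (hleft x)⟩

lemma map_star (hT : IsTripleHomAt T 1) (x : A) : T (star x) = T 1 * star (T x) * T 1 := by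
  simpa only [star_star, trip_eq_self_of_mem_peirceTwo (hT.map_mem_peirceTwo _)] using
    hT.trip_map_map_one_map_one (star x)

lemma map_mul_self (hT : IsTripleHomAt T 1) (x : A) : T (x * x) = trip (T x) (T 1) (T x) := by
  have hconst : ∀ s : ℝ, trip (T (exp (s • x))) (T 1) (T (exp (s • -x))) = T 1 := by
    refine fun s => hT _ _ _ ?_
    rw [trip_eq_iff, star_one, mul_one, mul_one, exp_smul_mul_exp_smul_neg,
      exp_smul_neg_mul_exp_smul]
  have hderiv := trip_second_deriv_sum_eq_zero_of_const hconst
    ((T.restrictScalars ℝ).hasDerivAt_exp_smul x) ((T.restrictScalars ℝ).hasDerivAt_exp_smul (-x))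
    ((T.restrictScalars ℝ).hasDerivAt_exp_smul_mul x x 0)
    ((T.restrictScalars ℝ).hasDerivAt_exp_smul_mul (-x) (-x) 0)
  simp only [ContinuousLinearMap.coe_restrictScalars', zero_smul, exp_zero, one_mul, neg_mul_neg,
    map_neg, trip_neg_right] at hderiv
  rw [trip_comm (T 1), trip_eq_self_of_mem_peirceTwo (hT.map_mem_peirceTwo _)] at hderiv
  linear_combination (norm := module) (2⁻¹ : ℂ) • hderiv

lemma map_trip_one (hT : IsTripleHomAt T 1) (a b : A) :
    T (trip a 1 b) = trip (T a) (T 1) (T b) :=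
  (T : A →ₗ[ℂ] B).map_trip_of_map_trip_self (fun x => by
    rw [trip_self, star_one, mul_one]; exact hT.map_mul_self x) a b

lemma map_trip (hT : IsTripleHomAt T 1) (a b c : A) :
    T (trip a b c) = trip (T a) (T b) (T c) := by
  calc T (trip a b c)
      = T (trip a 1 (trip (star b) 1 c) + trip c 1 (trip a 1 (star b))
          - trip (star b) 1 (trip a 1 c)) := by
        rw [← trip_mul_star_mul, one_mul, mul_one, star_star]
    _ = trip (T a) (T 1 * star (T (star b)) * T 1) (T c) := by
        simp only [map_add, map_sub, hT.map_trip_one, trip_mul_star_mul]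
    _ = trip (T a) (T b) (T c) := by
        rw [hT.map_star, mul_star_mul_star_mul_eq_of_mem_peirceTwo (hT.map_mem_peirceTwo b)]

end IsTripleHomAt

/-- A continuous linear map `T : A → B` between C*-algebras (`A` unital) which is a triple
homomorphism at the unit is a triple homomorphism; moreover `e := T(1)` is a partial isometry
and `T` is a Jordan `*`-homomorphism into the Peirce-2 subspace of `e`:
`T(x*) = e T(x)* e` and `T((ab+ba)/2) = (1/2)(T(a) e* T(b) + T(b) e* T(a))`. -/
theorem stmt19 {A B : Type*} [CStarAlgebra A] [NonUnitalCStarAlgebra B] (T : A →ₗ[ℂ] B)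
    (hcont : Continuous T)
    (hT : ∀ a b c : A, trip a b c = 1 → trip (T a) (T b) (T c) = T 1) :
    (∀ a b c : A, T (trip a b c) = trip (T a) (T b) (T c)) ∧
    T 1 * star (T 1) * T 1 = T 1 ∧
    (∀ x : A, T (star x) = T 1 * star (T x) * T 1) ∧
    (∀ a b : A, T ((2 : ℂ)⁻¹ • (a * b + b * a)) =
      (2 : ℂ)⁻¹ • (T a * star (T 1) * T b + T b * star (T 1) * T a)) := by
  have h : IsTripleHomAt (⟨T, hcont⟩ : A →L[ℂ] B) 1 := hT
  refine ⟨h.map_trip, h.map_one_mul_star_mul_self, h.map_star, fun a b => ?_⟩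
  simpa [trip] using h.map_trip_one a b
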